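/- Let B ⊆ A be an entwined C-extension with bijective entwining map ψ and induced left coaction λ(a) = ψ⁻¹(a·ρ(1)) = a₍₋₁₎⊗a₍₀₎. Then A is a left entwined module: for all a, ã ∈ A, λ(aã) = ψ⁻¹(a ⊗ ã₍₋₁₎)·ã₍₀₎, where the right-hand side means applying C⊗μ after ψ⁻¹⊗A to a ⊗ λ(ã). -/
import Mathlib


open TensorProduct LinearMap

noncomputable section

variable {k : Type*} [Field k]
variable {A : Type*} [Ring A] [Algebra k A]
variable {C : Type*} [AddCommGroup C] [Module k C] [Coalgebra k C]

/-- The map `(μ ⊗ C) ∘ (A ⊗ ψ)` on `(A ⊗ C) ⊗ A`, the right hand side of the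
entwining compatibility conditions. -/
def entRHS (ψ : C ⊗[k] A →ₗ[k] A ⊗[k] C) : (A ⊗[k] C) ⊗[k] A →ₗ[k] A ⊗[k] C :=
  rTensor C (mul' k A) ∘ₗ (TensorProduct.assoc k A A C).symm.toLinearMap ∘ₗ
    lTensor A ψ ∘ₗ (TensorProduct.assoc k A C A).toLinearMap

/-- A right-right entwining map `ψ : C ⊗ A → A ⊗ C`. -/
structure IsEntwining (ψ : C ⊗[k] A →ₗ[k] A ⊗[k] C) : Prop where
  mul_compat : ∀ (c : C) (a a' : A), ψ (c ⊗ₜ (a * a')) = entRHS ψ (ψ (c ⊗ₜ a) ⊗ₜ a')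
  one_compat : ∀ c : C, ψ (c ⊗ₜ 1) = (1 : A) ⊗ₜ c
  comul_compat : ∀ (c : C) (a : A),
    lTensor A (Coalgebra.comul (R := k)) (ψ (c ⊗ₜ a)) =
      (TensorProduct.assoc k A C C)
        (rTensor C ψ ((TensorProduct.assoc k C A C).symm
          (lTensor C ψ ((TensorProduct.assoc k C C A)
            ((Coalgebra.comul (R := k) c) ⊗ₜ a)))))
  counit_compat : ∀ (c : C) (a : A),
    (TensorProduct.rid k A) (lTensor A (Coalgebra.counit (R := k)) (ψ (c ⊗ₜ a))) =
      Coalgebra.counit (R := k) c • a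

/-- `ρ : A → A ⊗ C` is a right `C`-coaction. -/
structure IsRightCoaction (ρ : A →ₗ[k] A ⊗[k] C) : Prop where
  coassoc : ∀ a : A,
    (TensorProduct.assoc k A C C) (rTensor C ρ (ρ a)) =
      lTensor A (Coalgebra.comul (R := k)) (ρ a)
  counit_id : ∀ a : A,
    (TensorProduct.rid k A) (lTensor A (Coalgebra.counit (R := k)) (ρ a)) = a

/-- An entwined `C`-extension: a right `C`-comodule algebra structure on `A` given by a
bijective entwining map `ψ` (with inverse `ψinv`) and a coaction `ρ` satisfying
`ρ(a b) = a₍₀₎ ψ(a₍₁₎ ⊗ b)`. -/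
structure IsEntwinedExtension (ψ : C ⊗[k] A →ₗ[k] A ⊗[k] C)
    (ψinv : A ⊗[k] C →ₗ[k] C ⊗[k] A) (ρ : A →ₗ[k] A ⊗[k] C) : Prop where
  entwining : IsEntwining ψ
  coaction : IsRightCoaction ρ
  left_inv : ∀ x : C ⊗[k] A, ψinv (ψ x) = x
  right_inv : ∀ y : A ⊗[k] C, ψ (ψinv y) = y
  mul_coact : ∀ a b : A, ρ (a * b) = entRHS ψ (ρ a ⊗ₜ b)

/-- The induced left coaction `λ(a) = ψ⁻¹(a · ρ(1))`. -/
def leftCoact (ψinv : A ⊗[k] C →ₗ[k] C ⊗[k] A) (ρ : A →ₗ[k] A ⊗[k] C) :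
    A →ₗ[k] C ⊗[k] A :=
  ψinv ∘ₗ rTensor C (mul' k A) ∘ₗ (TensorProduct.assoc k A A C).symm.toLinearMap ∘ₗ
    (TensorProduct.mk k A (A ⊗[k] C)).flip (ρ 1)

/-- The lifted canonical map `κ : A ⊗ A → A ⊗ C`, `a ⊗ a' ↦ a · ρ(a')`. -/
def kappaMap (ρ : A →ₗ[k] A ⊗[k] C) : A ⊗[k] A →ₗ[k] A ⊗[k] C :=
  rTensor C (mul' k A) ∘ₗ (TensorProduct.assoc k A A C).symm.toLinearMap ∘ₗ lTensor A ρ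

/-- A cointegral on the coalgebra `C`: `δ(c₍₁₎ ⊗ c₍₂₎) = ε(c)` and
`c₍₁₎ δ(c₍₂₎ ⊗ c') = δ(c ⊗ c'₍₁₎) c'₍₂₎`. -/
def IsCointegral (δ : C ⊗[k] C →ₗ[k] k) : Prop :=
  (∀ c : C, δ (Coalgebra.comul (R := k) c) = Coalgebra.counit (R := k) c) ∧
  (∀ c c' : C,
    (TensorProduct.rid k C) (lTensor C δ ((TensorProduct.assoc k C C C)
      ((Coalgebra.comul (R := k) c) ⊗ₜ c'))) =
    (TensorProduct.lid k C) (rTensor C δ ((TensorProduct.assoc k C C C).symm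
      (c ⊗ₜ (Coalgebra.comul (R := k) c')))))

/-- `γ = (δ ⊗ A) ∘ (C ⊗ λ) : C ⊗ A → A`. -/
def gammaMap (δ : C ⊗[k] C →ₗ[k] k) (lam : A →ₗ[k] C ⊗[k] A) : C ⊗[k] A →ₗ[k] A :=
  (TensorProduct.lid k A).toLinearMap ∘ₗ rTensor A δ ∘ₗ
    (TensorProduct.assoc k C C A).symm.toLinearMap ∘ₗ lTensor C lam

/-- `α = (A ⊗ δ) ∘ (ρ ⊗ C) : A ⊗ C → A`. -/
def alphaMap (δ : C ⊗[k] C →ₗ[k] k) (ρ : A →ₗ[k] A ⊗[k] C) : A ⊗[k] C →ₗ[k] A :=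
  (TensorProduct.rid k A).toLinearMap ∘ₗ lTensor A δ ∘ₗ
    (TensorProduct.assoc k A C C).toLinearMap ∘ₗ rTensor C ρ

/-- `ℓ = (γ ⊗ α) ∘ (C ⊗ σ ⊗ C) ∘ (Δ ⊗ C) ∘ Δ : C → A ⊗ A`. -/
def ellMap (σ : C →ₗ[k] A ⊗[k] A) (γ : C ⊗[k] A →ₗ[k] A) (α : A ⊗[k] C →ₗ[k] A) :
    C →ₗ[k] A ⊗[k] A :=
  TensorProduct.map γ α ∘ₗ (TensorProduct.assoc k (C ⊗[k] A) A C).toLinearMap ∘ₗ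
    rTensor C (TensorProduct.assoc k C A A).symm.toLinearMap ∘ₗ
    rTensor C (lTensor C σ) ∘ₗ rTensor C (Coalgebra.comul (R := k)) ∘ₗ
    Coalgebra.comul (R := k)

/-- The map `(C ⊗ μ) ∘ (ψ⁻¹ ⊗ A)` on `A ⊗ (C ⊗ A)`. -/
def entRHSinv (ψinv : A ⊗[k] C →ₗ[k] C ⊗[k] A) : A ⊗[k] (C ⊗[k] A) →ₗ[k] C ⊗[k] A :=
  lTensor C (mul' k A) ∘ₗ (TensorProduct.assoc k C A A).toLinearMap ∘ₗ
    rTensor A ψinv ∘ₗ (TensorProduct.assoc k A C A).symm.toLinearMap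

/-- Left multiplication by `a` on `A ⊗ C`. -/
def actL (a : A) : A ⊗[k] C →ₗ[k] A ⊗[k] C :=
  rTensor C (mul' k A) ∘ₗ (TensorProduct.assoc k A A C).symm.toLinearMap ∘ₗ
    TensorProduct.mk k A (A ⊗[k] C) a

lemma actL_tmul (a x : A) (c : C) : actL a (x ⊗ₜ[k] c) = (a * x) ⊗ₜ[k] c := by
  simp [actL, mul'_apply]

lemma actL_mul (a b : A) (z : A ⊗[k] C) : actL (a * b) z = actL a (actL b z) := by
  induction z using TensorProduct.induction_on with
  | zero => simp
  | tmul x c => simp [actL_tmul, mul_assoc]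
  | add x y hx hy => simp [map_add, hx, hy]

lemma leftCoact_eq (ψinv : A ⊗[k] C →ₗ[k] C ⊗[k] A) (ρ : A →ₗ[k] A ⊗[k] C) (x : A) :
    leftCoact ψinv ρ x = ψinv (actL x (ρ 1)) := by
  simp [leftCoact, actL]

lemma entRHS_tmul' (ψ : C ⊗[k] A →ₗ[k] A ⊗[k] C) (a : A) (c : C) (b : A) :
    entRHS ψ ((a ⊗ₜ[k] c) ⊗ₜ[k] b) = actL a (ψ (c ⊗ₜ[k] b)) := by
  simp [entRHS, actL]

lemma mulRight_aux (x : C ⊗[k] A) (b : A) :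
    lTensor C (mul' k A) ((TensorProduct.assoc k C A A) (x ⊗ₜ[k] b)) =
      lTensor C (LinearMap.mulRight k b) x := by
  induction x using TensorProduct.induction_on with
  | zero => simp
  | tmul c a => simp [mul'_apply]
  | add x y hx hy => simp only [add_tmul, map_add, hx, hy]

lemma psi_mulRight (ψ : C ⊗[k] A →ₗ[k] A ⊗[k] C) (hψ : IsEntwining ψ)
    (x : C ⊗[k] A) (b : A) :
    ψ (lTensor C (LinearMap.mulRight k b) x) = entRHS ψ ((ψ x) ⊗ₜ[k] b) := by
  induction x using TensorProduct.induction_on with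
  | zero => simp
  | tmul c a => simpa using hψ.mul_compat c a b
  | add x y hx hy => simp only [map_add, add_tmul, hx, hy]

/-- In an entwined `C`-extension, `A` is a left entwined module with respect to the
induced left coaction `λ(a) = ψ⁻¹(a · ρ(1))`:
`λ(a b) = ψ⁻¹(a ⊗ b₍₋₁₎) · b₍₀₎ = ((C ⊗ μ) ∘ (ψ⁻¹ ⊗ A))(a ⊗ λ(b))`. -/
theorem left_entwined_module
    (ψ : C ⊗[k] A →ₗ[k] A ⊗[k] C) (ψinv : A ⊗[k] C →ₗ[k] C ⊗[k] A)
    (ρ : A →ₗ[k] A ⊗[k] C)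
    (hext : IsEntwinedExtension ψ ψinv ρ) :
    ∀ a b : A,
      leftCoact ψinv ρ (a * b) = entRHSinv ψinv (a ⊗ₜ leftCoact ψinv ρ b) := by
  intro a b
  have hinj : Function.Injective ψ := fun x y h => by
    rw [← hext.left_inv x, h, hext.left_inv]
  apply hinj
  have key : ∀ (a : A) (y : C ⊗[k] A),
      ψ (entRHSinv ψinv (a ⊗ₜ[k] y)) = actL a (ψ y) := by
    intro a y
    induction y using TensorProduct.induction_on with
    | zero => simp
    | tmul c b' =>
      have h1 : entRHSinv ψinv (a ⊗ₜ[k] (c ⊗ₜ[k] b')) =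
          lTensor C (LinearMap.mulRight k b') (ψinv (a ⊗ₜ[k] c)) := by
        simp [entRHSinv, mulRight_aux]
      rw [h1, psi_mulRight ψ hext.entwining, hext.right_inv, entRHS_tmul']
    | add x y hx hy => simp only [tmul_add, map_add, hx, hy]
  rw [key, leftCoact_eq, leftCoact_eq, hext.right_inv, hext.right_inv, actL_mul]
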